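/- Let T be a finite tree with N ≥ 2 vertices and let M be a set of marked vertices of T with |M| ≤ k, such that (1) every leaf of T is marked, and (2) no two unmarked vertices of degree 2 are adjacent in T. Then N ≤ 4k − 5. -/
import Mathlib


open SimpleGraph

namespace Paper

/-- Weight of a walk: the sum of the weights of its edges. -/
noncomputable def walkWeight {V : Type} {G : SimpleGraph V} (w : Sym2 V → ℝ) {u v : V}
    (p : G.Walk u v) : ℝ :=
  (p.edges.map w).sum

/-- Shortest-path distance in an edge-weighted graph (junk value `0` when no walk exists). -/
noncomputable def wdist {V : Type} (G : SimpleGraph V) (w : Sym2 V → ℝ) (u v : V) : ℝ :=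
  sInf {x | (∃ p : G.Walk u v, walkWeight w p = x) ∨ (∃ p : G.Walk v u, walkWeight w p = x)}

lemma wdist_comm {V : Type} (G : SimpleGraph V) (w : Sym2 V → ℝ) (u v : V) :
    wdist G w u v = wdist G w v u := by
  unfold wdist
  exact congrArg sInf (Set.ext fun x => or_comm)

/-- The weight function on pairs given by the shortest-path distance of `G`. -/
noncomputable def distWeight {V : Type} (G : SimpleGraph V) (w : Sym2 V → ℝ) : Sym2 V → ℝ :=
  Sym2.lift ⟨fun u v => wdist G w u v, fun u v => wdist_comm G w u v⟩

/-- Total weight of (the edges of) a graph. -/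
noncomputable def totalWeight {V : Type} (G : SimpleGraph V) (w : Sym2 V → ℝ) : ℝ :=
  ∑ᶠ e ∈ G.edgeSet, w e

/-- (Weighted) diameter of a graph: supremum of the pairwise distances. -/
noncomputable def wdiam {V : Type} (G : SimpleGraph V) (w : Sym2 V → ℝ) : ℝ :=
  sSup {x | ∃ u v : V, wdist G w u v = x}

/-- `H` is a minor of `G`: there are disjoint nonempty connected branch sets,
one for each vertex of `H`, such that each edge of `H` is realized between branch sets. -/
def HasMinor {V W : Type} (G : SimpleGraph V) (H : SimpleGraph W) : Prop :=
  ∃ B : W → Set V,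
    (∀ a, (B a).Nonempty) ∧
    (∀ a, (G.induce (B a)).Connected) ∧
    (∀ a b, a ≠ b → Disjoint (B a) (B b)) ∧
    (∀ a b, H.Adj a b → ∃ u ∈ B a, ∃ v ∈ B b, G.Adj u v)

/-- `G` does not contain the complete graph on `r` vertices as a minor. -/
def KMinorFree (r : ℕ) {V : Type} (G : SimpleGraph V) : Prop :=
  ¬ HasMinor G (⊤ : SimpleGraph (Fin r))

/-- Tree decomposition of `G` with tree `T` and bags `B`. -/
def IsTreeDecomp {V ι : Type} (G : SimpleGraph V) (T : SimpleGraph ι) (B : ι → Set V) : Prop :=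
  T.IsTree ∧
  (∀ v, ∃ i, v ∈ B i) ∧
  (∀ u v, G.Adj u v → ∃ i, u ∈ B i ∧ v ∈ B i) ∧
  (∀ v, (T.induce {i | v ∈ B i}).Connected)

/-- `G` has treewidth at most `k`. -/
def TreewidthAtMost {V : Type} (G : SimpleGraph V) (k : ℕ) : Prop :=
  ∃ (ι : Type) (T : SimpleGraph ι) (B : ι → Set V),
    IsTreeDecomp G T B ∧ ∀ i, (B i).ncard ≤ k + 1

/-- The number of cycles (orbits) of a permutation. -/
noncomputable def cycleCount {α : Type} (φ : Equiv.Perm α) : ℕ :=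
  Nat.card (Quotient (Equiv.Perm.SameCycle.setoid φ))

/-- The dart-reversal involution as a permutation of the darts of `G`. -/
def dartRev {V : Type} (G : SimpleGraph V) : Equiv.Perm G.Dart :=
  (SimpleGraph.Dart.symm_involutive (G := G)).toPerm

/-- `G` has (orientable) genus at most `g`: there is a rotation system on the darts of `G`
(a permutation preserving the source of each dart and acting as a single cycle on the darts
out of each vertex) whose number of faces satisfies the Euler-formula bound. -/
def GenusAtMost {V : Type} (G : SimpleGraph V) (g : ℕ) : Prop :=
  ∃ ρ : Equiv.Perm G.Dart,
    (∀ d : G.Dart, (ρ d).toProd.1 = d.toProd.1) ∧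
    (∀ d d' : G.Dart, d.toProd.1 = d'.toProd.1 → ρ.SameCycle d d') ∧
    (Nat.card G.support : ℤ) - (Nat.card G.edgeSet : ℤ)
        + (cycleCount (ρ * dartRev G) : ℤ)
      ≥ 2 * (Nat.card ((G.induce G.support).ConnectedComponent) : ℤ) - 2 * (g : ℤ)

/-- A vortex structure of width at most `h` on the graph `W`: a path decomposition
`X 0, …, X (t-1)` together with perimeter vertices `x i ∈ X i`. -/
structure VortexStructure {V : Type} (W : SimpleGraph V) (h : ℕ) where
  t : ℕ
  X : ℕ → Set V
  x : ℕ → V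
  mem_bag : ∀ i < t, x i ∈ X i
  vert_cover : ∀ v ∈ W.support, ∃ i < t, v ∈ X i
  edge_cover : ∀ u v, W.Adj u v → ∃ i < t, u ∈ X i ∧ v ∈ X i
  interval : ∀ i j k : ℕ, i ≤ j → j ≤ k → k < t → X i ∩ X k ⊆ X j
  width : ∀ i < t, (X i).ncard ≤ h + 1

/-- The cycle through the perimeter vertices `x 0, x 1, …, x (t-1)`, in this cyclic order. -/
def perimGraph {V : Type} (t : ℕ) (x : ℕ → V) : SimpleGraph V :=
  SimpleGraph.fromEdgeSet {e | ∃ i < t, e = s(x i, x ((i + 1) % t))}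

/-- The perimeter vertices of a vortex structure. -/
def VortexStructure.perimeter {V : Type} {W : SimpleGraph V} {h : ℕ}
    (vs : VortexStructure W h) : Set V :=
  vs.x '' (Set.Iio vs.t)

/-- `G` decomposes as `Gsur ∪ W_1 ∪ … ∪ W_m` where `Gsur` is (cellularly) embedded on a
surface of genus at most `g` and each `W_i` is a vortex of width at most `h` glued to a face
of `Gsur` (gluing is expressed by requiring that adding the perimeter cycle of each vortex
to the embedded part keeps the genus at most `g`, i.e. the perimeters lie consecutively on
faces of an embedding). -/
def VortexDecomp {V : Type} (G : SimpleGraph V) (g h m : ℕ) : Prop :=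
  ∃ (Gsur : SimpleGraph V) (W : Fin m → SimpleGraph V)
    (vs : (i : Fin m) → VortexStructure (W i) h),
    G = Gsur ⊔ (⨆ i, W i) ∧
    (∀ i, Disjoint Gsur.edgeSet (W i).edgeSet) ∧
    (∀ i j, i ≠ j → Disjoint (W i).support (W j).support) ∧
    (∀ i, (W i).support ∩ Gsur.support ⊆ (vs i).perimeter) ∧
    GenusAtMost (Gsur ⊔ (⨆ i, perimGraph (vs i).t (vs i).x)) g

/-- Delete (all edges incident to) a set of vertices from a graph. -/
def deleteSet {V : Type} (G : SimpleGraph V) (A : Set V) : SimpleGraph V :=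
  G ⊓ SimpleGraph.fromRel (fun u v => u ∉ A ∧ v ∉ A)

/-- `G` is nearly `h`-embeddable: after removing a set `A` of at most `h` apices,
the rest decomposes into a genus-`≤ h` embedded part with at most `h` vortices of width
at most `h` glued to faces. -/
def NearlyEmbeddable {V : Type} (G : SimpleGraph V) (h : ℕ) : Prop :=
  ∃ A : Set V, A.ncard ≤ h ∧ VortexDecomp (deleteSet G A) h h h

/-- A subset `L`-local `(1+ε)`-spanner of `G` w.r.t. the terminal set `K`. -/
def IsSubsetLocalSpanner {V : Type} (G H : SimpleGraph V) (w : Sym2 V → ℝ) (K : Set V)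
    (L ε : ℝ) : Prop :=
  H ≤ G ∧ ∀ t ∈ K, ∀ t' ∈ K, wdist G w t t' ≤ L → wdist H w t t' ≤ (1 + ε) * wdist G w t t'

/-- The weight of a minimum Steiner tree of the terminal set `K` in `G` (the minimum weight
of a subgraph of `G` in which all terminals are connected). -/
noncomputable def steinerWeight {V : Type} (G : SimpleGraph V) (w : Sym2 V → ℝ)
    (K : Set V) : ℝ :=
  sInf {x | ∃ H : SimpleGraph V, H ≤ G ∧ (∀ t ∈ K, ∀ t' ∈ K, H.Reachable t t') ∧
    totalWeight H w = x}

/-- Cost of visiting a list of vertices consecutively, using shortest-path distances. -/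
noncomputable def chainCost {V : Type} (G : SimpleGraph V) (w : Sym2 V → ℝ) : List V → ℝ
  | [] => 0
  | [_] => 0
  | a :: b :: rest => wdist G w a b + chainCost G w (b :: rest)

/-- Cost of a single tour: start at the depot `r`, visit the listed vertices in order,
and return to `r`; distances are shortest-path distances in `G`. -/
noncomputable def tourCost {V : Type} (G : SimpleGraph V) (w : Sym2 V → ℝ) (r : V)
    (ℓ : List V) : ℝ :=
  chainCost G w (r :: (ℓ ++ [r]))

/-- Cost of a solution: the sum of the costs of its tours. -/
noncomputable def solCost {V : Type} (G : SimpleGraph V) (w : Sym2 V → ℝ) (r : V)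
    (S : List (List V)) : ℝ :=
  (S.map (tourCost G w r)).sum

/-- A feasible solution of the capacitated vehicle routing problem: each tour makes at most
`Q` deliveries, and every vertex `v` receives exactly `d v` deliveries in total. -/
def VRPFeasible {V : Type} [DecidableEq V] (Q : ℕ) (d : V → ℕ) (S : List (List V)) : Prop :=
  (∀ ℓ ∈ S, ℓ.length ≤ Q) ∧ ∀ v : V, (S.map fun ℓ => ℓ.count v).sum = d v

/-- The optimal cost of the capacitated vehicle routing instance. -/
noncomputable def vrpOpt {V : Type} [DecidableEq V] (G : SimpleGraph V) (w : Sym2 V → ℝ)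
    (r : V) (Q : ℕ) (d : V → ℕ) : ℝ :=
  sInf {x | ∃ S : List (List V), VRPFeasible Q d S ∧ solCost G w r S = x}

/-- A clique-sum decomposition of `G` with adhesion at most `h`: a tree of pieces `Gp i`
with vertex sets `B i` whose union is `G`, such that adjacent pieces meet in at most `h`
vertices forming a clique in both pieces. -/
structure CSDecomp {V : Type} (G : SimpleGraph V) (h : ℕ) where
  ι : Type
  T : SimpleGraph ι
  tree : T.IsTree
  fin : Finite ι
  Gp : ι → SimpleGraph V
  B : ι → Set V
  supp : ∀ i, (Gp i).support ⊆ B i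
  union : G = ⨆ i, Gp i
  cover : ∀ v, ∃ i, v ∈ B i
  conn : ∀ v, (T.induce {i | v ∈ B i}).Connected
  adh_card : ∀ i j, T.Adj i j → (B i ∩ B j).ncard ≤ h
  adh_clique : ∀ i j, T.Adj i j → (Gp i).IsClique (B i ∩ B j) ∧ (Gp j).IsClique (B i ∩ B j)

/-- The vertex type of the graph obtained from `G` by cutting along the subgraph `H`:
the vertices outside `H` together with two copies (left and right) of `H`. -/
def CutVerts {V : Type} (G : SimpleGraph V) (H : G.Subgraph) : Type :=
  {v : V // v ∉ H.verts} ⊕ (↥H.verts ⊕ ↥H.verts)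

/-- The graph `G ✂ H` obtained by cutting `G` along a connected subgraph `H`, where `Le`
is the set of left edges (and the incident edges not in `Le` are the right edges). -/
def cutGraph {V : Type} (G : SimpleGraph V) (H : G.Subgraph) (Le : Set (Sym2 V)) :
    SimpleGraph (CutVerts G H) :=
  SimpleGraph.fromRel fun a b =>
    match a, b with
    | Sum.inl u, Sum.inl v => G.Adj u.1 v.1
    | Sum.inl u, Sum.inr (Sum.inl v) => G.Adj u.1 v.1 ∧ s(u.1, v.1) ∈ Le
    | Sum.inl u, Sum.inr (Sum.inr v) => G.Adj u.1 v.1 ∧ s(u.1, v.1) ∉ Le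
    | Sum.inr (Sum.inl u), Sum.inr (Sum.inl v) =>
        H.Adj u.1 v.1 ∨ (G.Adj u.1 v.1 ∧ s(u.1, v.1) ∈ Le)
    | Sum.inr (Sum.inr u), Sum.inr (Sum.inr v) =>
        H.Adj u.1 v.1 ∨ (G.Adj u.1 v.1 ∧ s(u.1, v.1) ∉ Le)
    | _, _ => False

/-- Projection from the vertices of the cut graph back to `V`. -/
def cutProj {V : Type} (G : SimpleGraph V) (H : G.Subgraph) : CutVerts G H → V :=
  Sum.elim Subtype.val (Sum.elim Subtype.val Subtype.val)

end Paper

open Paper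

set_option maxHeartbeats 1000000 in
/-- Let `T` be a finite tree with `N ≥ 2` vertices and let `M` be a set
of marked vertices with `|M| ≤ k`, such that every leaf is marked and no two unmarked
vertices of degree 2 are adjacent.  Then `N ≤ 4k − 5` (stated as `N + 5 ≤ 4k`). -/
theorem tree_marked_vertices_count (V : Type) [Fintype V] (T : SimpleGraph V)
    (M : Set V) (k : ℕ)
    (htree : T.IsTree) (hN : 2 ≤ Fintype.card V)
    (hleaf : ∀ v : V, (T.neighborSet v).ncard = 1 → v ∈ M)
    (hindep : ∀ u v : V, T.Adj u v →
      (T.neighborSet u).ncard = 2 → (T.neighborSet v).ncard = 2 → u ∈ M ∨ v ∈ M)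
    (hM : M.ncard ≤ k) :
    Fintype.card V + 5 ≤ 4 * k := by
  classical
  have hns : ∀ v : V, (T.neighborSet v).ncard = T.degree v := fun v => by
    rw [Set.ncard_eq_toFinset_card', ← SimpleGraph.neighborFinset_def]
    rfl
  -- every vertex has positive degree
  have hdegpos : ∀ v : V, 1 ≤ T.degree v := by
    intro v
    obtain ⟨w, hw⟩ := Fintype.exists_ne_of_one_lt_card (by omega) v
    obtain ⟨p⟩ := htree.isConnected.preconnected v w
    rw [Nat.one_le_iff_ne_zero]
    intro h0
    cases p with
    | nil => exact hw rfl
    | cons h q =>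
      have := (T.degree_pos_iff_exists_adj v).2 ⟨_, h⟩
      omega
  set D1 : Finset V := Finset.univ.filter (fun v => T.degree v = 1) with hD1
  set D2 : Finset V := Finset.univ.filter (fun v => T.degree v = 2) with hD2
  set D3 : Finset V := Finset.univ.filter (fun v => 3 ≤ T.degree v) with hD3
  set U : Finset V := Finset.univ.filter (fun v => v ∉ M ∧ T.degree v = 2) with hU
  have hE : T.edgeFinset.card + 1 = Fintype.card V := htree.card_edgeFinset
  have hsumdeg : ∑ v, T.degree v = 2 * T.edgeFinset.card :=
    T.sum_degrees_eq_twice_card_edges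
  -- partition by degree
  have h12 : Disjoint D1 D2 := by
    rw [Finset.disjoint_left]
    intro a ha hb
    simp only [hD1, hD2, Finset.mem_filter] at ha hb
    omega
  have h123 : Disjoint (D1 ∪ D2) D3 := by
    rw [Finset.disjoint_left]
    intro a ha hb
    simp only [hD1, hD2, hD3, Finset.mem_filter, Finset.mem_union] at ha hb
    omega
  have hunion : (D1 ∪ D2) ∪ D3 = Finset.univ := by
    apply Finset.eq_univ_of_forall
    intro v
    simp only [hD1, hD2, hD3, Finset.mem_filter, Finset.mem_union, Finset.mem_univ,
      true_and]
    have := hdegpos v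
    omega
  have hsplit : ∑ v, T.degree v
      = ∑ v ∈ D1, T.degree v + ∑ v ∈ D2, T.degree v + ∑ v ∈ D3, T.degree v := by
    rw [← Finset.sum_union h12, ← Finset.sum_union h123, hunion]
  have hs1 : ∑ v ∈ D1, T.degree v = D1.card := by
    rw [Finset.sum_congr rfl (fun v hv => by
      simp only [hD1, Finset.mem_filter] at hv; exact hv.2)]
    simp
  have hs2 : ∑ v ∈ D2, T.degree v = 2 * D2.card := by
    rw [Finset.sum_congr rfl (fun v hv => by
      simp only [hD2, Finset.mem_filter] at hv; exact hv.2)]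
    simp [mul_comm]
  have hs3 : 3 * D3.card ≤ ∑ v ∈ D3, T.degree v := by
    have := Finset.card_nsmul_le_sum D3 (fun v => T.degree v) 3 (fun v hv => by
      simp only [hD3, Finset.mem_filter] at hv; exact hv.2)
    simpa [mul_comm] using this
  have hcardpart : (D1 ∪ D2 ∪ D3).card = D1.card + D2.card + D3.card := by
    rw [Finset.card_union_of_disjoint h123, Finset.card_union_of_disjoint h12]
  rw [hunion, Finset.card_univ] at hcardpart
  -- independent set U: sum of degrees over U is at most the number of edges
  have hUedges : ∑ v ∈ U, T.degree v ≤ T.edgeFinset.card := by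
    have hdisj : ∀ x ∈ U, ∀ y ∈ U, x ≠ y →
        Disjoint (T.incidenceFinset x) (T.incidenceFinset y) := by
      intro x hx y hy hxy
      simp only [hU, Finset.mem_filter] at hx hy
      rw [Finset.disjoint_left]
      intro e he he'
      rw [SimpleGraph.mem_incidenceFinset] at he he'
      have hadj : T.Adj x y := T.adj_of_mem_incidenceSet hxy he he'
      have hx2 : (T.neighborSet x).ncard = 2 := by rw [hns]; exact hx.2.2
      have hy2 : (T.neighborSet y).ncard = 2 := by rw [hns]; exact hy.2.2
      rcases hindep x y hadj hx2 hy2 with h | h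
      · exact hx.2.1 h
      · exact hy.2.1 h
    calc ∑ v ∈ U, T.degree v = ∑ v ∈ U, (T.incidenceFinset v).card := by
          refine Finset.sum_congr rfl fun v _ => ?_
          rw [SimpleGraph.card_incidenceFinset_eq_degree]
      _ = (U.biUnion (fun v => T.incidenceFinset v)).card := (Finset.card_biUnion hdisj).symm
      _ ≤ T.edgeFinset.card := by
          apply Finset.card_le_card
          intro e he
          rw [Finset.mem_biUnion] at he
          obtain ⟨v, _, hv⟩ := he
          rw [SimpleGraph.mem_incidenceFinset] at hv
          rw [SimpleGraph.mem_edgeFinset]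
          exact hv.1
  have hUsum : ∑ v ∈ U, T.degree v = 2 * U.card := by
    rw [Finset.sum_congr rfl (fun v hv => by
      simp only [hU, Finset.mem_filter] at hv; exact hv.2.2)]
    simp [mul_comm]
  -- complement of U
  have hcompl : U.card + Uᶜ.card = Fintype.card V := by
    rw [Finset.card_add_card_compl]
  have hCsub : Uᶜ ⊆ M.toFinset ∪ D3 := by
    intro v hv
    simp only [hU, Finset.mem_compl, Finset.mem_filter, Finset.mem_univ, true_and,
      not_and] at hv
    rw [Finset.mem_union, Set.mem_toFinset]
    by_cases hvM : v ∈ M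
    · exact Or.inl hvM
    · have hne2 : T.degree v ≠ 2 := hv hvM
      have h1 := hdegpos v
      rcases Nat.lt_or_ge (T.degree v) 3 with hlt | hge
      · have : T.degree v = 1 := by omega
        exact absurd (hleaf v (by rw [hns]; exact this)) hvM
      · right; simp only [hD3, Finset.mem_filter, Finset.mem_univ, true_and]; exact hge
  have hCcard : Uᶜ.card ≤ M.ncard + D3.card := by
    calc Uᶜ.card ≤ (M.toFinset ∪ D3).card := Finset.card_le_card hCsub
      _ ≤ M.toFinset.card + D3.card := Finset.card_union_le _ _
      _ = M.ncard + D3.card := by rw [Set.ncard_eq_toFinset_card']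
  -- leaves are marked
  have hn1 : D1.card ≤ M.ncard := by
    rw [Set.ncard_eq_toFinset_card']
    apply Finset.card_le_card
    intro v hv
    simp only [hD1, Finset.mem_filter] at hv
    rw [Set.mem_toFinset]
    exact hleaf v (by rw [hns]; exact hv.2)
  omega
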